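/- arXiv:2011.11282 — 3 statements merged into one kernel-verified Lean document; each statement's English description precedes it below -/
import Mathlib

section
/- A graph with n vertices has at most n potential maximal cliques that are not free, i.e., at most n PMCs Ω containing a vertex with no neighbor outside Ω. -/
/-!
If a vertex `v` of a potential maximal clique `Ω` has no neighbour outside `Ω`, then `v` lies in
the neighbourhood of no component of `H \ Ω`, so every other vertex of `Ω` must be adjacent to
`v`: `Ω` is the closed neighbourhood `N[v]`. Hence a non-free PMC is determined by one vertex.
-/

/-- The graph `H` with vertices of `Ω` made isolated (edges within `V \ Ω`). -/
def restrict {V : Type*} (H : SimpleGraph V) (Ω : Set V) : SimpleGraph V where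
  Adj a b := H.Adj a b ∧ a ∉ Ω ∧ b ∉ Ω
  symm := ⟨fun _ _ ⟨h, ha, hb⟩ => ⟨h.symm, hb, ha⟩⟩
  loopless := ⟨fun _ h => H.irrefl h.1⟩

/-- `C` is the vertex set of a connected component of `H \ Ω`. -/
def IsCompOf {V : Type*} (H : SimpleGraph V) (Ω C : Set V) : Prop :=
  ∃ a, a ∉ Ω ∧ C = {b | b ∉ Ω ∧ (restrict H Ω).Reachable a b}

/-- Neighborhood of a vertex set: vertices outside `C` adjacent to some vertex of `C`. -/
def nbhd {V : Type*} (H : SimpleGraph V) (C : Set V) : Set V :=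
  {w | w ∉ C ∧ ∃ c ∈ C, H.Adj w c}

/-- `Ω` is a potential maximal clique of `H`. -/
def IsPMC {V : Type*} (H : SimpleGraph V) (Ω : Set V) : Prop :=
  (∀ C, IsCompOf H Ω C → nbhd H C ≠ Ω) ∧
  (∀ u ∈ Ω, ∀ v ∈ Ω, u ≠ v →
    H.Adj u v ∨ ∃ C, IsCompOf H Ω C ∧ u ∈ nbhd H C ∧ v ∈ nbhd H C)

/-- A PMC is free if every vertex of `Ω` has a neighbor outside `Ω`. -/
def IsFree {V : Type*} (H : SimpleGraph V) (Ω : Set V) : Prop :=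
  ∀ v ∈ Ω, ∃ w, w ∉ Ω ∧ H.Adj v w

section

variable {V : Type*} {H : SimpleGraph V} {Ω C : Set V} {v : V}

theorem IsCompOf.subset_compl (hC : IsCompOf H Ω C) : C ⊆ Ωᶜ := by
  obtain ⟨_, _, rfl⟩ := hC
  exact fun _ hb => hb.1

theorem IsCompOf.exists_adj_notMem_of_mem_nbhd (hC : IsCompOf H Ω C) (hv : v ∈ nbhd H C) :
    ∃ w, w ∉ Ω ∧ H.Adj v w := by
  obtain ⟨_, c, hc, hvc⟩ := hv
  exact ⟨c, hC.subset_compl hc, hvc⟩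

theorem not_isFree_iff : ¬ IsFree H Ω ↔ ∃ v ∈ Ω, H.neighborSet v ⊆ Ω := by
  simp only [IsFree, not_forall, not_exists, not_and, Set.subset_def, SimpleGraph.mem_neighborSet,
    exists_prop]
  exact exists_congr fun _ => and_congr_right fun _ => forall_congr' fun _ => not_imp_not

theorem IsPMC.eq_insert_neighborSet (hΩ : IsPMC H Ω) (hvΩ : v ∈ Ω)
    (hv : H.neighborSet v ⊆ Ω) : Ω = insert v (H.neighborSet v) := by
  refine subset_antisymm (fun u huΩ => ?_) (Set.insert_subset hvΩ hv)
  obtain rfl | huv := eq_or_ne u v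
  · exact Set.mem_insert u _
  rcases hΩ.2 u huΩ v hvΩ huv with hadj | ⟨C, hC, -, hvC⟩
  · exact Set.mem_insert_of_mem v hadj.symm
  · obtain ⟨w, hwΩ, hvw⟩ := hC.exists_adj_notMem_of_mem_nbhd hvC
    exact absurd (hv hvw) hwΩ

end

theorem stmt1 {V : Type*} [Fintype V] (H : SimpleGraph V) :
    {Ω : Set V | IsPMC H Ω ∧ ¬ IsFree H Ω}.ncard ≤ Fintype.card V := by
  have hsub : {Ω : Set V | IsPMC H Ω ∧ ¬ IsFree H Ω} ⊆
      Set.range fun v => insert v (H.neighborSet v) := by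
    rintro Ω ⟨hΩ, hnf⟩
    obtain ⟨v, hvΩ, hv⟩ := not_isFree_iff.1 hnf
    exact ⟨v, (hΩ.eq_insert_neighborSet hvΩ hv).symm⟩
  calc _ ≤ (Set.range fun v => insert v (H.neighborSet v)).ncard :=
        Set.ncard_le_ncard hsub (Set.finite_range _)
    _ ≤ Nat.card V := Finite.card_range_le _
    _ = Fintype.card V := Nat.card_eq_fintype_card
end

section
/- The map sending a partition {P_1, P_2, P_3} of [k] into three nonempty parts to the set Ω of pair-vertices {i,j} with i, j in different parts is injective. Consequently the graph G_k has at least S(k,3) distinct potential maximal cliques Ω with Ω ∩ [k] = ∅, where S(k,3) is the Stirling number of the second kind. -/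
/-- Vertices of `G_k`: `[k]` together with the 2-element subsets of `[k]`. -/
abbrev GkV (k : ℕ) := Fin k ⊕ {S : Finset (Fin k) // S.card = 2}

/-- The incidence graph of 2-element subsets of `[k]` over `[k]`. -/
def Gk (k : ℕ) : SimpleGraph (GkV k) where
  Adj a b := match a, b with
    | .inl i, .inr S => i ∈ S.val
    | .inr S, .inl i => i ∈ S.val
    | _, _ => False
  symm := ⟨by rintro (i|S) (j|T) h <;> simp_all⟩
  loopless := ⟨by rintro (i|S) h <;> simp_all⟩

/-- `{P1, P2, P3}` is a partition of `[k]` into three nonempty parts. -/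
def IsTripartition {k : ℕ} (P1 P2 P3 : Set (Fin k)) : Prop :=
  P1.Nonempty ∧ P2.Nonempty ∧ P3.Nonempty ∧
  Disjoint P1 P2 ∧ Disjoint P1 P3 ∧ Disjoint P2 P3 ∧ P1 ∪ P2 ∪ P3 = Set.univ

/-- The set of pair-vertices `{i, j}` with `i` and `j` in different parts of `{P1, P2, P3}`. -/
def Omega3 {k : ℕ} (P1 P2 P3 : Set (Fin k)) : Set (GkV k) :=
  {x | ∃ S : {S : Finset (Fin k) // S.card = 2}, x = Sum.inr S ∧
    ∃ i ∈ S.val, ∃ j ∈ S.val, i ≠ j ∧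
      ¬((i ∈ P1 ∧ j ∈ P1) ∨ (i ∈ P2 ∧ j ∈ P2) ∨ (i ∈ P3 ∧ j ∈ P3))}

/-- Stirling numbers of the second kind. -/
def stirling : ℕ → ℕ → ℕ
  | 0, 0 => 1
  | 0, _ + 1 => 0
  | _ + 1, 0 => 0
  | n + 1, j + 1 => (j + 1) * stirling n (j + 1) + stirling n j

open Function

section CrossPairs

variable {k : ℕ} {ι : Type*}

def pairOf {i j : Fin k} (h : i ≠ j) : {S : Finset (Fin k) // S.card = 2} :=
  ⟨{i, j}, Finset.card_pair h⟩

def crossPairs (c : Fin k → ι) : Set (GkV k) :=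
  Sum.inr '' {S | ∃ i ∈ S.val, ∃ j ∈ S.val, c i ≠ c j}

lemma inl_notMem_crossPairs (c : Fin k → ι) (i : Fin k) : Sum.inl i ∉ crossPairs c := by
  simp [crossPairs]

lemma inr_mem_crossPairs {c : Fin k → ι} {S : {S : Finset (Fin k) // S.card = 2}} :
    Sum.inr S ∈ crossPairs c ↔ ∃ i ∈ S.val, ∃ j ∈ S.val, c i ≠ c j :=
  Sum.inr_injective.mem_set_image

lemma inr_pairOf_mem_crossPairs {c : Fin k → ι} {i j : Fin k} (h : i ≠ j) :
    Sum.inr (pairOf h) ∈ crossPairs c ↔ c i ≠ c j := by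
  simp only [inr_mem_crossPairs, pairOf, Finset.mem_insert, Finset.mem_singleton]
  constructor
  · rintro ⟨a, ha, b, hb, hab⟩ hij
    rcases ha with rfl | rfl <;> rcases hb with rfl | rfl <;> simp_all
  · exact fun hij => ⟨i, Or.inl rfl, j, Or.inr rfl, hij⟩

lemma labels_eq_of_crossPairs_eq {c d : Fin k → ι} (h : crossPairs c = crossPairs d)
    (i j : Fin k) : c i = c j ↔ d i = d j := by
  rcases eq_or_ne i j with rfl | hij
  · simp
  · have := Set.ext_iff.mp h (Sum.inr (pairOf hij))
    rwa [inr_pairOf_mem_crossPairs, inr_pairOf_mem_crossPairs, not_iff_not] at this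

def LabelledBy (c : Fin k → ι) (t : ι) : GkV k → Prop
  | .inl i => c i = t
  | .inr S => ∀ i ∈ S.val, c i = t

lemma exists_labelledBy_of_notMem {c : Fin k → ι} {a : GkV k} (ha : a ∉ crossPairs c) :
    ∃ t, LabelledBy c t a := by
  rcases a with i | S
  · exact ⟨c i, rfl⟩
  · obtain ⟨i, hi⟩ : S.val.Nonempty := Finset.card_pos.mp (by rw [S.prop]; norm_num)
    refine ⟨c i, fun j hj => ?_⟩
    by_contra hji
    exact ha (inr_mem_crossPairs.mpr ⟨j, hj, i, hi, hji⟩)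

lemma LabelledBy.of_adj {c : Fin k → ι} {t : ι} {a b : GkV k}
    (hab : (restrict (Gk k) (crossPairs c)).Adj a b) (ha : LabelledBy c t a) :
    LabelledBy c t b := by
  obtain ⟨hadj, -, hb⟩ := hab
  rcases a with i | S <;> rcases b with j | T
  · exact hadj.elim
  · intro m hm
    by_contra hmt
    exact hb (inr_mem_crossPairs.mpr ⟨m, hm, i, hadj, fun h => hmt (h.trans ha)⟩)
  · exact ha j hadj
  · exact hadj.elim

lemma LabelledBy.of_reachable {c : Fin k → ι} {t : ι} {a b : GkV k}
    (hab : (restrict (Gk k) (crossPairs c)).Reachable a b) (ha : LabelledBy c t a) :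
    LabelledBy c t b := by
  rw [SimpleGraph.reachable_iff_reflTransGen] at hab
  induction hab with
  | refl => exact ha
  | tail _ hadj ih => exact ih.of_adj hadj

lemma reachable_inl_of_label_eq {c : Fin k → ι} {m m' : Fin k} (h : c m = c m') :
    (restrict (Gk k) (crossPairs c)).Reachable (Sum.inl m) (Sum.inl m') := by
  rcases eq_or_ne m m' with rfl | hne
  · rfl
  · have hS : Sum.inr (pairOf hne) ∉ crossPairs c := by
      rw [inr_pairOf_mem_crossPairs, not_not]; exact h
    have h₁ : (restrict (Gk k) (crossPairs c)).Adj (Sum.inl m) (Sum.inr (pairOf hne)) :=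
      ⟨Finset.mem_insert_self _ _, inl_notMem_crossPairs c m, hS⟩
    have h₂ : (restrict (Gk k) (crossPairs c)).Adj (Sum.inr (pairOf hne)) (Sum.inl m') :=
      ⟨Finset.mem_insert_of_mem (Finset.mem_singleton_self _), hS, inl_notMem_crossPairs c m'⟩
    exact h₁.reachable.trans h₂.reachable

end CrossPairs

section PMC

variable {k : ℕ} {c : Fin k → Fin 3}

lemma nbhd_ne_crossPairs (hc : Surjective c) {C : Set (GkV k)}
    (hC : IsCompOf (Gk k) (crossPairs c) C) : nbhd (Gk k) C ≠ crossPairs c := by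
  obtain ⟨a, ha, rfl⟩ := hC
  intro hN
  obtain ⟨t, hat⟩ := exists_labelledBy_of_notMem ha
  obtain ⟨u, v, hut, hvt, huv⟩ : ∃ u v : Fin 3, u ≠ t ∧ v ≠ t ∧ u ≠ v := by
    clear hat; revert t; decide
  obtain ⟨p, rfl⟩ := hc u
  obtain ⟨q, rfl⟩ := hc v
  have hpq : p ≠ q := fun h => huv (congrArg c h)
  have hmem := (inr_pairOf_mem_crossPairs hpq).mpr huv
  rw [← hN] at hmem
  obtain ⟨-, b, ⟨-, hab⟩, hadj⟩ := hmem
  have hb := hat.of_reachable hab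
  rcases b with m | S
  · rcases Finset.mem_insert.mp hadj with rfl | hm
    · exact hut hb
    · exact hvt (Finset.mem_singleton.mp hm ▸ hb)
  · exact hadj.elim

lemma fin_three_pairs_meet : ∀ a b a' b' : Fin 3, a ≠ b → a' ≠ b' →
    a = a' ∨ a = b' ∨ b = a' ∨ b = b' := by
  decide

lemma exists_comp_of_mem_crossPairs {u v : GkV k} (hu : u ∈ crossPairs c)
    (hv : v ∈ crossPairs c) :
    ∃ C, IsCompOf (Gk k) (crossPairs c) C ∧ u ∈ nbhd (Gk k) C ∧ v ∈ nbhd (Gk k) C := by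
  obtain ⟨S, ⟨i, hi, j, hj, hij⟩, rfl⟩ := id hu
  obtain ⟨T, ⟨i', hi', j', hj', hij'⟩, rfl⟩ := id hv
  obtain ⟨m, hm, m', hm', hmm'⟩ : ∃ m ∈ S.val, ∃ m' ∈ T.val, c m = c m' := by
    rcases fin_three_pairs_meet _ _ _ _ hij hij' with h | h | h | h
    exacts [⟨i, hi, i', hi', h⟩, ⟨i, hi, j', hj', h⟩, ⟨j, hj, i', hi', h⟩, ⟨j, hj, j', hj', h⟩]
  exact ⟨_, ⟨.inl m, inl_notMem_crossPairs c m, rfl⟩,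
    ⟨fun h => h.1 hu, .inl m, ⟨inl_notMem_crossPairs c m, .refl _⟩, hm⟩,
    ⟨fun h => h.1 hv, .inl m', ⟨inl_notMem_crossPairs c m', reachable_inl_of_label_eq hmm'⟩, hm'⟩⟩

theorem isPMC_crossPairs (hc : Surjective c) : IsPMC (Gk k) (crossPairs c) :=
  ⟨fun _ => nbhd_ne_crossPairs hc,
    fun _ hu _ hv _ => Or.inr (exists_comp_of_mem_crossPairs hu hv)⟩

end PMC

section Tripartition

variable {k : ℕ}

lemma fin_three_not_same_iff : ∀ a b : Fin 3,
    ¬((a = 0 ∧ b = 0) ∨ (a = 1 ∧ b = 1) ∨ (a = 2 ∧ b = 2)) ↔ a ≠ b := by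
  decide

lemma omega3_preimage (c : Fin k → Fin 3) :
    Omega3 (c ⁻¹' {0}) (c ⁻¹' {1}) (c ⁻¹' {2}) = crossPairs c := by
  ext x
  simp only [Omega3, crossPairs, Set.mem_preimage, Set.mem_singleton_iff,
    fin_three_not_same_iff, Set.mem_image]
  constructor
  · rintro ⟨S, rfl, i, hi, j, hj, -, hij⟩
    exact ⟨S, ⟨i, hi, j, hj, hij⟩, rfl⟩
  · rintro ⟨S, ⟨i, hi, j, hj, hij⟩, rfl⟩
    exact ⟨S, rfl, i, hi, j, hj, fun h => hij (congrArg c h), hij⟩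

lemma IsTripartition.exists_labelling {P1 P2 P3 : Set (Fin k)} (hP : IsTripartition P1 P2 P3) :
    ∃ c : Fin k → Fin 3, Surjective c ∧ P1 = c ⁻¹' {0} ∧ P2 = c ⁻¹' {1} ∧ P3 = c ⁻¹' {2} := by
  classical
  obtain ⟨⟨p1, hp1⟩, ⟨p2, hp2⟩, ⟨p3, hp3⟩, h12, h13, h23, hcover⟩ := hP
  have hmem : ∀ i, i ∈ P1 ∨ i ∈ P2 ∨ i ∈ P3 := fun i => by
    simpa [or_assoc] using Set.eq_univ_iff_forall.mp hcover i
  have d12 := Set.disjoint_left.mp h12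
  have d13 := Set.disjoint_left.mp h13
  have d23 := Set.disjoint_left.mp h23
  let c : Fin k → Fin 3 := fun i => if i ∈ P1 then 0 else if i ∈ P2 then 1 else 2
  have hfib : P1 = c ⁻¹' {0} ∧ P2 = c ⁻¹' {1} ∧ P3 = c ⁻¹' {2} := by
    refine ⟨?_, ?_, ?_⟩ <;> ext i <;> have := hmem i <;>
      simp only [c, Set.mem_preimage, Set.mem_singleton_iff] <;> split_ifs <;> simp_all
  refine ⟨c, fun t => ?_, hfib⟩
  match t with
  | 0 => exact ⟨p1, (hfib.1 ▸ hp1 : p1 ∈ c ⁻¹' {0})⟩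
  | 1 => exact ⟨p2, (hfib.2.1 ▸ hp2 : p2 ∈ c ⁻¹' {1})⟩
  | 2 => exact ⟨p3, (hfib.2.2 ▸ hp3 : p3 ∈ c ⁻¹' {2})⟩

lemma preimage_fin_three_eq_range {α : Type*} {c : α → Fin 3} (hc : Surjective c) :
    ({c ⁻¹' {0}, c ⁻¹' {1}, c ⁻¹' {2}} : Set (Set α)) = Set.range fun i => c ⁻¹' {c i} := by
  rw [show (fun i => c ⁻¹' {c i}) = (fun t => c ⁻¹' {t}) ∘ c from rfl, hc.range_comp]
  ext X
  simp [Fin.exists_fin_succ, eq_comm]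

end Tripartition

section RestrictedGrowth

-- The canonical labelling of a partition of `Fin n` into `j` blocks, numbered in order of
-- first appearance; these strings are counted by the Stirling numbers `stirling n j`.
def IsRestrictedGrowth {n j : ℕ} (f : Fin n → Fin j) : Prop :=
  Surjective f ∧ ∀ i, ∀ w < f i, ∃ i' < i, f i' = w

variable {n j : ℕ}

lemma IsRestrictedGrowth.snoc {g : Fin n → Fin (j + 1)} (hg : IsRestrictedGrowth g)
    (v : Fin (j + 1)) : IsRestrictedGrowth (Fin.snoc g v : Fin (n + 1) → Fin (j + 1)) := by
  obtain ⟨hsurj, hgrow⟩ := hg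
  refine ⟨fun w => ?_, fun i w hw => ?_⟩
  · obtain ⟨i, rfl⟩ := hsurj w
    exact ⟨i.castSucc, Fin.snoc_castSucc ..⟩
  · induction i using Fin.lastCases with
    | last =>
      obtain ⟨i, rfl⟩ := hsurj w
      exact ⟨i.castSucc, Fin.castSucc_lt_last i, Fin.snoc_castSucc ..⟩
    | cast i =>
      rw [Fin.snoc_castSucc] at hw
      obtain ⟨i', hi', rfl⟩ := hgrow i w hw
      exact ⟨i'.castSucc, Fin.castSucc_lt_castSucc_iff.mpr hi', Fin.snoc_castSucc ..⟩

lemma IsRestrictedGrowth.snoc_last {g : Fin n → Fin j} (hg : IsRestrictedGrowth g) :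
    IsRestrictedGrowth
      (Fin.snoc (Fin.castSucc ∘ g) (Fin.last j) : Fin (n + 1) → Fin (j + 1)) := by
  obtain ⟨hsurj, hgrow⟩ := hg
  refine ⟨fun w => ?_, fun i w hw => ?_⟩
  · induction w using Fin.lastCases with
    | last => exact ⟨Fin.last n, Fin.snoc_last ..⟩
    | cast w =>
      obtain ⟨i, rfl⟩ := hsurj w
      exact ⟨i.castSucc, Fin.snoc_castSucc ..⟩
  · obtain ⟨w, rfl⟩ : ∃ w', Fin.castSucc w' = w := by
      exact Fin.exists_castSucc_eq.mpr (Fin.ne_last_of_lt (hw.trans_le (Fin.le_last _)))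
    induction i using Fin.lastCases with
    | last =>
      obtain ⟨i, rfl⟩ := hsurj w
      exact ⟨i.castSucc, Fin.castSucc_lt_last i, Fin.snoc_castSucc ..⟩
    | cast i =>
      rw [Fin.snoc_castSucc, Function.comp_apply, Fin.castSucc_lt_castSucc_iff] at hw
      obtain ⟨i', hi', rfl⟩ := hgrow i w hw
      exact ⟨i'.castSucc, Fin.castSucc_lt_castSucc_iff.mpr hi', Fin.snoc_castSucc ..⟩

lemma stirling_le_card_restrictedGrowth :
    ∀ n j : ℕ, stirling n j ≤ Nat.card {f : Fin n → Fin j // IsRestrictedGrowth f}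
  | 0, 0 => Nat.one_le_iff_ne_zero.mpr <| Nat.card_ne_zero.mpr
      ⟨⟨⟨Fin.elim0, fun w => w.elim0, fun i => i.elim0⟩⟩, inferInstance⟩
  | 0, _ + 1 | _ + 1, 0 => Nat.zero_le _
  | n + 1, j + 1 => by
    -- the last element either joins one of the `j + 1` blocks of the first `n`, or is alone
    let extend : (Fin (j + 1) × {g : Fin n → Fin (j + 1) // IsRestrictedGrowth g}) →
        {f : Fin (n + 1) → Fin (j + 1) // IsRestrictedGrowth f} :=
      fun ⟨v, g⟩ => ⟨Fin.snoc g.1 v, g.2.snoc v⟩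
    let isolate : {g : Fin n → Fin j // IsRestrictedGrowth g} →
        {f : Fin (n + 1) → Fin (j + 1) // IsRestrictedGrowth f} :=
      fun g => ⟨Fin.snoc (Fin.castSucc ∘ g.1) (Fin.last j), g.2.snoc_last⟩
    have hextend : Injective extend := by
      rintro ⟨v, g⟩ ⟨v', g'⟩ h
      have h := congrArg Subtype.val h
      simp only [extend, Fin.snoc_injective2.eq_iff] at h
      obtain ⟨hg, rfl⟩ := h
      rw [Subtype.ext hg]
    have hisolate : Injective isolate := by
      intro g g' h
      have h := congrArg Subtype.val h
      simp only [isolate, Fin.snoc_injective2.eq_iff] at h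
      exact Subtype.ext ((Fin.castSucc_injective j).comp_left h.1)
    have hdisjoint : ∀ a b, extend a ≠ isolate b := by
      rintro ⟨v, g⟩ b h
      obtain ⟨i, hi⟩ := g.2.1 (Fin.last j)
      have := congrFun (congrArg Subtype.val h) i.castSucc
      simp only [extend, isolate, Fin.snoc_castSucc, Function.comp_apply, hi] at this
      exact (Fin.castSucc_lt_last _).ne' this
    have hcard := Nat.card_le_card_of_injective _ (hextend.sumElim hisolate hdisjoint)
    rw [Nat.card_sum, Nat.card_prod, Nat.card_eq_fintype_card, Fintype.card_fin] at hcard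
    calc stirling (n + 1) (j + 1) = (j + 1) * stirling n (j + 1) + stirling n j := rfl
      _ ≤ _ := by
        gcongr
        exacts [stirling_le_card_restrictedGrowth n (j + 1), stirling_le_card_restrictedGrowth n j]
      _ ≤ _ := hcard

lemma IsRestrictedGrowth.eq_of_eq_iff {f g : Fin n → Fin j} (hf : IsRestrictedGrowth f)
    (hg : IsRestrictedGrowth g) (h : ∀ i i', f i = f i' ↔ g i = g i') : f = g := by
  funext i
  induction i using WellFoundedLT.induction with
  | _ i ih =>
    rcases lt_trichotomy (f i) (g i) with hlt | heq | hgt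
    · obtain ⟨i', hi', hgi'⟩ := hg.2 i (f i) hlt
      rw [← hgi', ← (h i' i).mp (by rw [ih i' hi', hgi'])]
    · exact heq
    · obtain ⟨i', hi', hfi'⟩ := hf.2 i (g i) hgt
      rw [← hfi', (h i' i).mpr (by rw [← ih i' hi', hfi'])]

end RestrictedGrowth

theorem stmt7 (k : ℕ) :
    (∀ P1 P2 P3 Q1 Q2 Q3 : Set (Fin k), IsTripartition P1 P2 P3 → IsTripartition Q1 Q2 Q3 →
      Omega3 P1 P2 P3 = Omega3 Q1 Q2 Q3 →
      ({P1, P2, P3} : Set (Set (Fin k))) = {Q1, Q2, Q3}) ∧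
    stirling k 3 ≤ {Ω : Set (GkV k) | IsPMC (Gk k) Ω ∧ ∀ i : Fin k, Sum.inl i ∉ Ω}.ncard := by
  constructor
  · intro P1 P2 P3 Q1 Q2 Q3 hP hQ h
    obtain ⟨c, hc, rfl, rfl, rfl⟩ := hP.exists_labelling
    obtain ⟨d, hd, rfl, rfl, rfl⟩ := hQ.exists_labelling
    rw [omega3_preimage, omega3_preimage] at h
    rw [preimage_fin_three_eq_range hc, preimage_fin_three_eq_range hd]
    congr! 2 with i
    ext j
    exact labels_eq_of_crossPairs_eq h j i
  · set M := {Ω : Set (GkV k) | IsPMC (Gk k) Ω ∧ ∀ i : Fin k, Sum.inl i ∉ Ω}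
    let toPMC : {f : Fin k → Fin 3 // IsRestrictedGrowth f} → M :=
      fun f => ⟨crossPairs f.1, isPMC_crossPairs f.2.1, inl_notMem_crossPairs f.1⟩
    have hinj : Injective toPMC := fun f g h =>
      Subtype.ext (f.2.eq_of_eq_iff g.2 (labels_eq_of_crossPairs_eq (congrArg Subtype.val h)))
    calc stirling k 3 ≤ Nat.card {f : Fin k → Fin 3 // IsRestrictedGrowth f} :=
          stirling_le_card_restrictedGrowth k 3
      _ ≤ Nat.card M := Nat.card_le_card_of_injective toPMC hinj
      _ = M.ncard := Nat.card_coe_set_eq M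
end

section
/- For every 0 ≤ i ≤ k, the graph G_k has at least S(k−i, 3) free potential maximal cliques Ω with Ω ∩ [k] = [i], where S denotes Stirling numbers of the second kind. -/
/-! A partition of `[k] \ [i]` into three blocks, seen as a colouring `c` with colours `0, 1, 2`,
yields `Ω = [i] ∪ {pairs inside [k] \ [i] that c does not colour constantly}`. Every component of
`G_k \ Ω` meets a single colour class, so it misses the pair of the two other colours; any two
vertices of `Ω` border a common component, because two bichromatic pairs share one of the three
colours. `Ω` is free, and it determines the partition through its pairs. Partitions of an `n`-set
into `j` blocks are counted by canonical colourings, which obey the Stirling recursion. -/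

open Finset

/-- Restricted growth strings read from the right: lists of length `n` with values `0, …, j - 1`
in which, scanning from the end, each new value is the least one not yet used. They are the
canonical colourings of the partitions of an `n`-set into `j` blocks. -/
def growthStrings : ℕ → ℕ → Finset (List ℕ)
  | 0, 0 => {[]}
  | 0, _ + 1 => ∅
  | _ + 1, 0 => ∅
  | n + 1, j + 1 =>
      (range (j + 1) ×ˢ growthStrings n (j + 1)).image (fun p => p.1 :: p.2) ∪
        (growthStrings n j).image (j :: ·)

lemma mem_growthStrings_zero {j : ℕ} {l : List ℕ} :
    l ∈ growthStrings 0 j ↔ l = [] ∧ j = 0 := by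
  cases j <;> simp [growthStrings]

lemma mem_growthStrings_succ {n j : ℕ} {l : List ℕ} :
    l ∈ growthStrings (n + 1) j ↔
      ∃ a t, l = a :: t ∧
        (a < j ∧ t ∈ growthStrings n j ∨ a + 1 = j ∧ t ∈ growthStrings n a) := by
  cases j with
  | zero => simp [growthStrings]
  | succ j =>
    simp only [growthStrings, mem_union, mem_image, mem_product, mem_range, Prod.exists,
      Nat.add_right_cancel_iff]
    constructor
    · rintro (⟨a, t, ⟨ha, ht⟩, rfl⟩ | ⟨t, ht, rfl⟩)
      · exact ⟨a, t, rfl, .inl ⟨ha, ht⟩⟩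
      · exact ⟨j, t, rfl, .inr ⟨rfl, ht⟩⟩
    · rintro ⟨a, t, rfl, ⟨ha, ht⟩ | ⟨rfl, ht⟩⟩
      · exact .inl ⟨a, t, ⟨ha, ht⟩, rfl⟩
      · exact .inr ⟨t, ht, rfl⟩

lemma length_of_mem_growthStrings :
    ∀ {n j : ℕ} {l : List ℕ}, l ∈ growthStrings n j → l.length = n
  | 0, _, _, hl => by simp [(mem_growthStrings_zero.mp hl).1]
  | n + 1, _, _, hl => by
    obtain ⟨a, t, rfl, ⟨-, ht⟩ | ⟨-, ht⟩⟩ := mem_growthStrings_succ.mp hl <;>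
      simp [length_of_mem_growthStrings ht]

lemma mem_iff_lt_of_mem_growthStrings :
    ∀ {n j : ℕ} {l : List ℕ}, l ∈ growthStrings n j → ∀ x, x ∈ l ↔ x < j
  | 0, _, _, hl, x => by simp [mem_growthStrings_zero.mp hl]
  | n + 1, _, _, hl, x => by
    obtain ⟨a, t, rfl, ⟨ha, ht⟩ | ⟨rfl, ht⟩⟩ := mem_growthStrings_succ.mp hl <;>
      simp only [List.mem_cons, mem_iff_lt_of_mem_growthStrings ht x] <;> omega

lemma eq_of_mem_growthStrings_of_mem_growthStrings {n j j' : ℕ} {l : List ℕ}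
    (hj : l ∈ growthStrings n j) (hj' : l ∈ growthStrings n j') : j = j' := by
  have h := mem_iff_lt_of_mem_growthStrings hj
  have h' := mem_iff_lt_of_mem_growthStrings hj'
  have := (h j).symm.trans (h' j)
  have := (h j').symm.trans (h' j')
  omega

lemma card_growthStrings : ∀ n j, (growthStrings n j).card = stirling n j
  | 0, 0 | 0, _ + 1 | _ + 1, 0 => rfl
  | n + 1, j + 1 => by
    have hdisj : Disjoint ((range (j + 1) ×ˢ growthStrings n (j + 1)).image (fun p => p.1 :: p.2))
        ((growthStrings n j).image (j :: ·)) := by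
      simp only [disjoint_left, mem_image, mem_product, mem_range, Prod.exists, not_exists,
        not_and]
      rintro _ ⟨a, t, ⟨-, ht⟩, rfl⟩ s hs hst
      obtain ⟨rfl, rfl⟩ := List.cons.inj hst
      have hj := (mem_iff_lt_of_mem_growthStrings ht j).mpr (Nat.lt_succ_self j)
      exact (mem_iff_lt_of_mem_growthStrings hs j).mp hj |>.false
    rw [growthStrings, card_union_of_disjoint hdisj,
      card_image_of_injective _ (fun p q h => Prod.ext (List.cons.inj h).1 (List.cons.inj h).2),
      card_image_of_injective _ List.cons_injective, card_product, card_range,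
      card_growthStrings, card_growthStrings, stirling]

lemma mem_growthStrings_of_cons_mem_of_not_mem {n j a : ℕ} {t : List ℕ}
    (h : a :: t ∈ growthStrings (n + 1) j) (ha : a ∉ t) : t ∈ growthStrings n a := by
  obtain ⟨a, t, heq, ⟨hlt, ht⟩ | ⟨-, ht⟩⟩ := mem_growthStrings_succ.mp h <;>
    obtain ⟨rfl, rfl⟩ := List.cons.inj heq
  · exact absurd ((mem_iff_lt_of_mem_growthStrings ht a).mpr hlt) ha
  · exact ht

lemma mem_iff_exists_getD {t : List ℕ} {a : ℕ} :
    a ∈ t ↔ ∃ p < t.length, t.getD p 0 = a := by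
  simp only [List.mem_iff_getElem]
  constructor
  · rintro ⟨p, hp, rfl⟩
    exact ⟨p, hp, List.getD_eq_getElem _ _ hp⟩
  · rintro ⟨p, hp, rfl⟩
    exact ⟨p, hp, (List.getD_eq_getElem _ _ hp).symm⟩

lemma eq_of_mem_growthStrings_of_getD_eq_iff :
    ∀ {n j j' : ℕ} {l l' : List ℕ}, l ∈ growthStrings n j → l' ∈ growthStrings n j' →
      (∀ p < n, ∀ q < n, l.getD p 0 = l.getD q 0 ↔ l'.getD p 0 = l'.getD q 0) → l = l'
  | 0, _, _, _, _, hl, hl', _ => by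
    rw [(mem_growthStrings_zero.mp hl).1, (mem_growthStrings_zero.mp hl').1]
  | n + 1, _, _, _, _, hl, hl', h => by
    obtain ⟨a, t, rfl, hat⟩ := mem_growthStrings_succ.mp hl
    obtain ⟨a', t', rfl, hat'⟩ := mem_growthStrings_succ.mp hl'
    obtain ⟨_, ht⟩ : ∃ j, t ∈ growthStrings n j := by
      rcases hat with ⟨-, ht⟩ | ⟨-, ht⟩ <;> exact ⟨_, ht⟩
    obtain ⟨_, ht'⟩ : ∃ j, t' ∈ growthStrings n j := by
      rcases hat' with ⟨-, ht⟩ | ⟨-, ht⟩ <;> exact ⟨_, ht⟩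
    obtain rfl : t = t' := eq_of_mem_growthStrings_of_getD_eq_iff ht ht' fun p hp q hq => by
      simpa using h (p + 1) (by omega) (q + 1) (by omega)
    have hhead : ∀ p < n, a = t.getD p 0 ↔ a' = t.getD p 0 := fun p hp => by
      simpa using h 0 (by omega) (p + 1) (by omega)
    have hlen := length_of_mem_growthStrings ht
    -- the head is either a value of the tail, pinned down by `h`, or the least unused value
    by_cases hmem : a ∈ t
    · obtain ⟨p, hp, rfl⟩ := mem_iff_exists_getD.mp hmem
      exact congrArg (· :: t) ((hhead p (hlen ▸ hp)).mp rfl).symm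
    · have hmem' : a' ∉ t := fun h' => hmem <| by
        obtain ⟨p, hp, hpa⟩ := mem_iff_exists_getD.mp h'
        exact mem_iff_exists_getD.mpr ⟨p, hp, ((hhead p (hlen ▸ hp)).mpr hpa.symm).symm⟩
      rw [eq_of_mem_growthStrings_of_mem_growthStrings
        (mem_growthStrings_of_cons_mem_of_not_mem hl hmem)
        (mem_growthStrings_of_cons_mem_of_not_mem hl' hmem')]

section Components

variable {V : Type*} {H : SimpleGraph V} {Ω : Set V} {a b w : V}

def componentOf (H : SimpleGraph V) (Ω : Set V) (a : V) : Set V :=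
  {b | b ∉ Ω ∧ (restrict H Ω).Reachable a b}

lemma isCompOf_componentOf (ha : a ∉ Ω) : IsCompOf H Ω (componentOf H Ω a) := ⟨a, ha, rfl⟩

lemma mem_componentOf_self (ha : a ∉ Ω) : a ∈ componentOf H Ω a := ⟨ha, .refl a⟩

lemma mem_componentOf_of_adj (hb : b ∈ componentOf H Ω a) (hw : w ∉ Ω) (hbw : H.Adj b w) :
    w ∈ componentOf H Ω a :=
  ⟨hw, hb.2.trans (SimpleGraph.Adj.reachable ⟨hbw, hb.1, hw⟩)⟩

lemma mem_nbhd_componentOf (hw : w ∈ Ω) (hb : b ∈ componentOf H Ω a) (hwb : H.Adj w b) :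
    w ∈ nbhd H (componentOf H Ω a) :=
  ⟨fun h => h.1 hw, b, hb, hwb⟩

lemma componentOf_subset_of_forall_adj {P : V → Prop} (ha : P a)
    (hP : ∀ v w, v ∉ Ω → w ∉ Ω → H.Adj v w → P v → P w) :
    componentOf H Ω a ⊆ {b | P b} := by
  rintro b ⟨-, ⟨p⟩⟩
  induction p with
  | nil => exact ha
  | cons hadj _ ih => exact ih (hP _ _ hadj.2.1 hadj.2.2 hadj.1 ha)

end Components

section Gk

variable {k : ℕ}

def pairVertex {x y : Fin k} (hxy : x ≠ y) : GkV k := .inr ⟨{x, y}, card_pair hxy⟩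

lemma Gk_adj_inl_inr {j : Fin k} {S : {S : Finset (Fin k) // S.card = 2}} :
    (Gk k).Adj (.inl j) (.inr S) ↔ j ∈ S.val := Iff.rfl

lemma Gk_adj_left_pairVertex {x y : Fin k} (hxy : x ≠ y) :
    (Gk k).Adj (.inl x) (pairVertex hxy) :=
  Gk_adj_inl_inr.mpr (mem_insert_self x {y})

lemma Gk_adj_right_pairVertex {x y : Fin k} (hxy : x ≠ y) :
    (Gk k).Adj (.inl y) (pairVertex hxy) :=
  Gk_adj_inl_inr.mpr (mem_insert_of_mem (mem_singleton_self y))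

lemma eq_pair_of_mem {S : {S : Finset (Fin k) // S.card = 2}} {x y : Fin k} (hx : x ∈ S.val)
    (hy : y ∈ S.val) (hxy : x ≠ y) : (.inr S : GkV k) = pairVertex hxy := by
  refine congrArg Sum.inr (Subtype.ext (eq_of_subset_of_card_le ?_ ?_).symm)
  · simp [insert_subset_iff, hx, hy]
  · simp [S.2, card_pair hxy]

def pmcOfColoring (i : ℕ) (c : Fin k → ℕ) : Set (GkV k)
  | .inl j => (j : ℕ) < i
  | .inr S => (∀ x ∈ S.val, i ≤ (x : ℕ)) ∧ ∃ x ∈ S.val, ∃ y ∈ S.val, c x ≠ c y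

def HasColor (i : ℕ) (c : Fin k → ℕ) (m : ℕ) : GkV k → Prop
  | .inl y => c y = m
  | .inr S => ∀ y ∈ S.val, i ≤ (y : ℕ) → c y = m

variable {i : ℕ} {c : Fin k → ℕ}

lemma pairVertex_mem_pmcOfColoring_iff {x y : Fin k} (hxy : x ≠ y) :
    pairVertex hxy ∈ pmcOfColoring i c ↔
      i ≤ (x : ℕ) ∧ i ≤ (y : ℕ) ∧ c x ≠ c y := by
  show (∀ z ∈ ({x, y} : Finset (Fin k)), i ≤ (z : ℕ)) ∧ _ ↔ _
  simp only [mem_insert, mem_singleton, forall_eq_or_imp, forall_eq, exists_eq_or_imp,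
    exists_eq_left, ne_eq, not_true_eq_false, false_or, or_false]
  constructor
  · rintro ⟨⟨hx, hy⟩, h | h⟩
    · exact ⟨hx, hy, h⟩
    · exact ⟨hx, hy, Ne.symm h⟩
  · rintro ⟨hx, hy, h⟩
    exact ⟨⟨hx, hy⟩, .inl h⟩

lemma color_eq_of_inr_not_mem_pmcOfColoring {S : {S : Finset (Fin k) // S.card = 2}}
    {y z : Fin k} (hS : .inr S ∉ pmcOfColoring i c) (hy : y ∈ S.val) (hz : z ∈ S.val)
    (hyi : i ≤ (y : ℕ)) (hzi : i ≤ (z : ℕ)) : c y = c z := by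
  by_cases hyz : y = z
  · rw [hyz]
  rw [eq_pair_of_mem hy hz hyz, pairVertex_mem_pmcOfColoring_iff] at hS
  by_contra h
  exact hS ⟨hyi, hzi, h⟩

lemma HasColor.of_adj {m : ℕ} {v w : GkV k} (hv : v ∉ pmcOfColoring i c)
    (hw : w ∉ pmcOfColoring i c) (hvw : (Gk k).Adj v w) (h : HasColor i c m v) :
    HasColor i c m w :=
  match v, w with
  | .inl _, .inl _ => hvw.elim
  | .inr _, .inr _ => hvw.elim
  | .inl _, .inr _ => fun _ hz hzi =>
      (color_eq_of_inr_not_mem_pmcOfColoring hw hz hvw hzi (not_lt.mp hv)).trans h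
  | .inr _, .inl _ => h _ hvw (not_lt.mp hw)

lemma exists_hasColor {a : GkV k} (ha : a ∉ pmcOfColoring i c) : ∃ m, HasColor i c m a :=
  match a with
  | .inl y => ⟨c y, rfl⟩
  | .inr S => by
    by_cases h : ∃ y ∈ S.val, i ≤ (y : ℕ)
    · obtain ⟨y, hy, hyi⟩ := h
      exact ⟨c y, fun z hz hzi => color_eq_of_inr_not_mem_pmcOfColoring ha hz hy hzi hyi⟩
    · exact ⟨0, fun y hy hyi => (h ⟨y, hy, hyi⟩).elim⟩

/-- A component of `G_k \ Ω` meets a single colour class, so the pair formed by the two other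
colours lies in `Ω` but not in its neighbourhood. -/
lemma nbhd_componentOf_ne_pmcOfColoring
    (hc : ∀ m, m < 3 ↔ ∃ x : Fin k, i ≤ (x : ℕ) ∧ c x = m) {a : GkV k}
    (ha : a ∉ pmcOfColoring i c) :
    nbhd (Gk k) (componentOf (Gk k) (pmcOfColoring i c) a) ≠ pmcOfColoring i c := by
  obtain ⟨m, hm⟩ := exists_hasColor ha
  obtain ⟨m₁, m₂, h₁, h₂, h₁₂, h₁m, h₂m⟩ :
      ∃ m₁ m₂, m₁ < 3 ∧ m₂ < 3 ∧ m₁ ≠ m₂ ∧ m₁ ≠ m ∧ m₂ ≠ m :=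
    ⟨if m = 1 then 0 else 1, if m = 2 then 0 else 2, by split_ifs <;> omega⟩
  obtain ⟨x₁, hx₁, rfl⟩ := (hc m₁).mp h₁
  obtain ⟨x₂, hx₂, rfl⟩ := (hc m₂).mp h₂
  have hx : x₁ ≠ x₂ := fun h => h₁₂ (congrArg c h)
  intro heq
  have hmem : pairVertex hx ∈ pmcOfColoring i c :=
    (pairVertex_mem_pmcOfColoring_iff hx).mpr ⟨hx₁, hx₂, h₁₂⟩
  rw [← heq] at hmem
  obtain ⟨-, v, hv, hadj⟩ := hmem
  have hvm := componentOf_subset_of_forall_adj hm (fun _ _ => HasColor.of_adj) hv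
  match v with
  | .inl z =>
    rcases mem_insert.mp hadj with rfl | hz
    · exact h₁m hvm
    · exact h₂m (mem_singleton.mp hz ▸ hvm)
  | .inr _ => exact hadj.elim

lemma inl_mem_componentOf_inl {x y : Fin k} (hx : i ≤ (x : ℕ)) (hy : i ≤ (y : ℕ))
    (hxy : c x = c y) : .inl y ∈ componentOf (Gk k) (pmcOfColoring i c) (.inl x) := by
  have hx' : .inl x ∉ pmcOfColoring i c := not_lt.mpr hx
  by_cases h : x = y
  · exact h ▸ mem_componentOf_self hx'
  have hP : pairVertex h ∉ pmcOfColoring i c := by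
    rw [pairVertex_mem_pmcOfColoring_iff]
    exact fun h' => h'.2.2 hxy
  exact mem_componentOf_of_adj
    (mem_componentOf_of_adj (mem_componentOf_self hx') hP (Gk_adj_left_pairVertex h))
    (not_lt.mpr hy) (Gk_adj_right_pairVertex h).symm

lemma inl_mem_nbhd_componentOf_inl {j x : Fin k} (hj : (j : ℕ) < i) (hx : i ≤ (x : ℕ)) :
    .inl j ∈ nbhd (Gk k) (componentOf (Gk k) (pmcOfColoring i c) (.inl x)) := by
  have hjx : j ≠ x := Fin.ne_of_val_ne (by omega)
  have hP : pairVertex hjx ∉ pmcOfColoring i c := by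
    rw [pairVertex_mem_pmcOfColoring_iff]
    omega
  exact mem_nbhd_componentOf hj
    (mem_componentOf_of_adj (mem_componentOf_self (not_lt.mpr hx)) hP
      (Gk_adj_right_pairVertex hjx))
    (Gk_adj_left_pairVertex hjx)

lemma inr_mem_nbhd_componentOf_inl {S : {S : Finset (Fin k) // S.card = 2}} {q x : Fin k}
    (hS : .inr S ∈ pmcOfColoring i c) (hq : q ∈ S.val) (hx : i ≤ (x : ℕ))
    (hqx : c x = c q) :
    .inr S ∈ nbhd (Gk k) (componentOf (Gk k) (pmcOfColoring i c) (.inl x)) :=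
  mem_nbhd_componentOf hS (inl_mem_componentOf_inl hx (hS.1 q hq) hqx) hq

lemma exists_mem_nbhd_componentOf_inl
    (hc : ∀ m, m < 3 ↔ ∃ x : Fin k, i ≤ (x : ℕ) ∧ c x = m) {u v : GkV k}
    (hu : u ∈ pmcOfColoring i c) (hv : v ∈ pmcOfColoring i c) :
    ∃ x : Fin k, i ≤ (x : ℕ) ∧
      u ∈ nbhd (Gk k) (componentOf (Gk k) (pmcOfColoring i c) (.inl x)) ∧
      v ∈ nbhd (Gk k) (componentOf (Gk k) (pmcOfColoring i c) (.inl x)) :=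
  match u, v with
  | .inl _, .inl _ => by
    obtain ⟨x, hx, -⟩ := (hc 0).mp (by norm_num)
    exact ⟨x, hx, inl_mem_nbhd_componentOf_inl hu hx, inl_mem_nbhd_componentOf_inl hv hx⟩
  | .inl _, .inr _ => by
    obtain ⟨x, hxS, -⟩ := hv.2
    exact ⟨x, hv.1 x hxS, inl_mem_nbhd_componentOf_inl hu (hv.1 x hxS),
      inr_mem_nbhd_componentOf_inl hv hxS (hv.1 x hxS) rfl⟩
  | .inr _, .inl _ => by
    obtain ⟨x, hxS, -⟩ := hu.2
    exact ⟨x, hu.1 x hxS, inr_mem_nbhd_componentOf_inl hu hxS (hu.1 x hxS) rfl,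
      inl_mem_nbhd_componentOf_inl hv (hu.1 x hxS)⟩
  | .inr S, .inr T => by
    -- two pairs, each meeting two of the three colours, share a colour
    obtain ⟨p, hp, q, hq, hpq⟩ : ∃ p ∈ S.val, ∃ q ∈ T.val, c p = c q := by
      obtain ⟨x, hx, y, hy, hxy⟩ := hu.2
      obtain ⟨x', hx', y', hy', hxy'⟩ := hv.2
      have hcol : ∀ z ∈ S.val ∪ T.val, c z < 3 := fun z hz => (hc (c z)).mpr
        ⟨z, (mem_union.mp hz).elim (hu.1 z) (hv.1 z), rfl⟩
      by_contra! h
      have := h x hx x' hx'; have := h x hx y' hy'; have := h y hy x' hx'; have := h y hy y' hy'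
      have := hcol x (by simp [hx]); have := hcol y (by simp [hy])
      have := hcol x' (by simp [hx']); have := hcol y' (by simp [hy'])
      omega
    exact ⟨p, hu.1 p hp, inr_mem_nbhd_componentOf_inl hu hp (hu.1 p hp) rfl,
      inr_mem_nbhd_componentOf_inl hv hq (hu.1 p hp) hpq⟩

lemma isPMC_pmcOfColoring (hc : ∀ m, m < 3 ↔ ∃ x : Fin k, i ≤ (x : ℕ) ∧ c x = m) :
    IsPMC (Gk k) (pmcOfColoring i c) := by
  refine ⟨fun _ ⟨_, ha, hC⟩ => hC ▸ nbhd_componentOf_ne_pmcOfColoring hc ha,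
    fun u hu v hv _ => .inr ?_⟩
  obtain ⟨x, hx, hux, hvx⟩ := exists_mem_nbhd_componentOf_inl hc hu hv
  exact ⟨_, isCompOf_componentOf (not_lt.mpr hx), hux, hvx⟩

lemma isFree_pmcOfColoring (hx : ∃ x : Fin k, i ≤ (x : ℕ)) :
    IsFree (Gk k) (pmcOfColoring i c)
  | .inl j, (hj : (j : ℕ) < i) => by
    obtain ⟨x, hx⟩ := hx
    have hjx : j ≠ x := Fin.ne_of_val_ne (by omega)
    refine ⟨pairVertex hjx, ?_, Gk_adj_left_pairVertex hjx⟩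
    rw [pairVertex_mem_pmcOfColoring_iff]
    omega
  | .inr _, hS => by
    obtain ⟨x, hxS, -⟩ := hS.2
    exact ⟨.inl x, not_lt.mpr (hS.1 x hxS), hxS⟩

lemma color_eq_iff_of_pmcOfColoring_eq {c' : Fin k → ℕ}
    (h : pmcOfColoring i c = pmcOfColoring i c') {x y : Fin k} (hx : i ≤ (x : ℕ))
    (hy : i ≤ (y : ℕ)) : c x = c y ↔ c' x = c' y := by
  by_cases hxy : x = y
  · simp [hxy]
  have := congrArg (pairVertex hxy ∈ ·) h
  simp only [pairVertex_mem_pmcOfColoring_iff, eq_iff_iff] at this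
  tauto

end Gk

lemma exists_getD_sub_eq_iff_mem {k i m : ℕ} {l : List ℕ} (hl : l.length = k - i) :
    (∃ x : Fin k, i ≤ (x : ℕ) ∧ l.getD (x - i) 0 = m) ↔ m ∈ l := by
  rw [mem_iff_exists_getD]
  constructor
  · rintro ⟨x, hx, h⟩
    exact ⟨x - i, by omega, h⟩
  · rintro ⟨p, hp, h⟩
    exact ⟨⟨i + p, by omega⟩, by simp, by simpa using h⟩

theorem stmt9_general (k i : ℕ) :
    stirling (k - i) 3 ≤
      {Ω : Set (GkV k) | IsPMC (Gk k) Ω ∧ IsFree (Gk k) Ω ∧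
        ∀ j : Fin k, Sum.inl j ∈ Ω ↔ (j : ℕ) < i}.ncard := by
  let coloring (l : List ℕ) (x : Fin k) : ℕ := l.getD (x - i) 0
  have hcolors : ∀ l ∈ growthStrings (k - i) 3,
      ∀ m, m < 3 ↔ ∃ x : Fin k, i ≤ (x : ℕ) ∧ coloring l x = m := fun l hl m =>
    (mem_iff_lt_of_mem_growthStrings hl m).symm.trans
      (exists_getD_sub_eq_iff_mem (length_of_mem_growthStrings hl)).symm
  rw [← card_growthStrings, ← Set.ncard_coe_finset]
  refine Set.ncard_le_ncard_of_injOn (fun l => pmcOfColoring i (coloring l)) ?_ ?_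
  · intro l hl
    obtain ⟨x, hx, -⟩ := (hcolors l hl 0).mp (by norm_num)
    exact ⟨isPMC_pmcOfColoring (hcolors l hl), isFree_pmcOfColoring ⟨x, hx⟩,
      fun _ => Iff.rfl⟩
  · intro l hl l' hl' h
    refine eq_of_mem_growthStrings_of_getD_eq_iff hl hl' fun p hp q hq => ?_
    simpa [coloring] using color_eq_iff_of_pmcOfColoring_eq h
      (x := ⟨i + p, by omega⟩) (y := ⟨i + q, by omega⟩) (by simp) (by simp)

theorem stmt9 (k i : ℕ) (hik : i ≤ k) :
    stirling (k - i) 3 ≤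
      {Ω : Set (GkV k) | IsPMC (Gk k) Ω ∧ IsFree (Gk k) Ω ∧
        ∀ j : Fin k, Sum.inl j ∈ Ω ↔ (j : ℕ) < i}.ncard :=
  stmt9_general k i
end
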